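/- arXiv:2310.11183 — 2 statements merged into one kernel-verified Lean document; each statement's English description precedes it below -/
import Mathlib

section
/- Let R be a commutative ring in which 2 is invertible. Then the functor u from the category of R-modules with involution to the category of R̄-modules, sending an R-module M with involution w to the Mackey functor M̄ with M̄(C₂/e) = M (with involution w), M̄(C₂/C₂) = M^w the fixed submodule, restriction the inclusion M^w ↪ M, and transfer tr = 1 + w : M → M^w, is an equivalence of categories. -/
/-!
Statement 13: For a commutative ring `R` in which `2` is invertible, the functor `u` from
`R`-modules with involution to modules over the constant Green functor `R̄` — sending an
`R`-module `M` with involution `w` to the Mackey functor with value `M` at `C₂/e`, value the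
fixed submodule `M^w` at `C₂/C₂`, restriction the inclusion and transfer `1 + w` — is an
equivalence of categories.
-/

open CategoryTheory

/-- An `R`-module together with an `R`-linear involution. -/
structure InvModule (R : Type) [CommRing R] : Type 1 where
  M : Type
  [addM : AddCommGroup M]
  [modM : Module R M]
  w : M →ₗ[R] M
  w_w : ∀ x, w (w x) = x

attribute [instance] InvModule.addM InvModule.modM

namespace InvModule

variable {R : Type} [CommRing R]

/-- Morphisms of `R`-modules with involution: equivariant `R`-linear maps. -/
@[ext]
structure Hom (X Y : InvModule R) where
  f : X.M →ₗ[R] Y.M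
  comm : ∀ x, f (X.w x) = Y.w (f x)

instance : Category (InvModule R) where
  Hom X Y := Hom X Y
  id X := ⟨LinearMap.id, fun _ => rfl⟩
  comp φ ψ :=
    ⟨ψ.f ∘ₗ φ.f, fun x => by
      simp only [LinearMap.comp_apply, φ.comm x, ψ.comm (φ.f x)]⟩
  id_comp φ := Hom.ext (LinearMap.ext fun _ => rfl)
  comp_id φ := Hom.ext (LinearMap.ext fun _ => rfl)
  assoc φ ψ χ := Hom.ext (LinearMap.ext fun _ => rfl)

end InvModule

/-- A module over the constant Green functor `R̄` for the group `ℤ/2`: a `ℤ/2`-Mackey functor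
whose two values are `R`-modules, with `R`-linear restriction `res`, transfer `tr` and
involution `w` satisfying the Mackey relations `w∘w = id`, `w∘res = res`, `tr∘w = tr`,
`res∘tr = 1 + w`, together with the relation `tr∘res = 2` characterizing `R̄`-modules. -/
structure RBarModule (R : Type) [CommRing R] : Type 1 where
  Ce : Type
  CC : Type
  [addCe : AddCommGroup Ce]
  [modCe : Module R Ce]
  [addCC : AddCommGroup CC]
  [modCC : Module R CC]
  w : Ce →ₗ[R] Ce
  res : CC →ₗ[R] Ce
  tr : Ce →ₗ[R] CC
  w_w : ∀ x, w (w x) = x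
  w_res : ∀ y, w (res y) = res y
  tr_w : ∀ x, tr (w x) = tr x
  res_tr : ∀ x, res (tr x) = x + w x
  tr_res : ∀ y, tr (res y) = y + y

attribute [instance] RBarModule.addCe RBarModule.modCe RBarModule.addCC RBarModule.modCC

namespace RBarModule

variable {R : Type} [CommRing R]

/-- Morphisms of `R̄`-modules: pointwise `R`-linear morphisms of Mackey functors. -/
@[ext]
structure Hom (X Y : RBarModule R) where
  e : X.Ce →ₗ[R] Y.Ce
  c : X.CC →ₗ[R] Y.CC
  comm_w : ∀ x, e (X.w x) = Y.w (e x)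
  comm_res : ∀ y, e (X.res y) = Y.res (c y)
  comm_tr : ∀ x, c (X.tr x) = Y.tr (e x)

instance : Category (RBarModule R) where
  Hom X Y := Hom X Y
  id X := ⟨LinearMap.id, LinearMap.id, fun _ => rfl, fun _ => rfl, fun _ => rfl⟩
  comp φ ψ :=
    ⟨ψ.e ∘ₗ φ.e, ψ.c ∘ₗ φ.c,
      fun x => by simp only [LinearMap.comp_apply, φ.comm_w x, ψ.comm_w (φ.e x)],
      fun y => by simp only [LinearMap.comp_apply, φ.comm_res y, ψ.comm_res (φ.c y)],
      fun x => by simp only [LinearMap.comp_apply, φ.comm_tr x, ψ.comm_tr (φ.e x)]⟩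
  id_comp φ := Hom.ext (LinearMap.ext fun _ => rfl) (LinearMap.ext fun _ => rfl)
  comp_id φ := Hom.ext (LinearMap.ext fun _ => rfl) (LinearMap.ext fun _ => rfl)
  assoc φ ψ χ := Hom.ext (LinearMap.ext fun _ => rfl) (LinearMap.ext fun _ => rfl)

end RBarModule

/-- The fixed submodule `M^w` of an `R`-module with involution. -/
def InvModule.fixed {R : Type} [CommRing R] (X : InvModule R) : Submodule R X.M where
  carrier := {x | X.w x = x}
  add_mem' := by
    intro a b ha hb
    simp only [Set.mem_setOf_eq, map_add] at *
    rw [ha, hb]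
  zero_mem' := by simp
  smul_mem' := by
    intro r a ha
    simp only [Set.mem_setOf_eq, map_smul] at *
    rw [ha]

theorem InvModule.mem_fixed {R : Type} [CommRing R] (X : InvModule R) (y : X.M) :
    y ∈ X.fixed ↔ X.w y = y := Iff.rfl

/-- The functor `u` from `R`-modules with involution to `R̄`-modules: it sends `(M, w)` to the
Mackey functor with `M̄(C₂/e) = M` (with involution `w`), `M̄(C₂/C₂) = M^w` the fixed
submodule, restriction the inclusion `M^w ↪ M` and transfer `tr = 1 + w : M → M^w`. -/
def uFunctor (R : Type) [CommRing R] : InvModule R ⥤ RBarModule R where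
  obj X :=
    { Ce := X.M
      CC := X.fixed
      w := X.w
      res := X.fixed.subtype
      tr := LinearMap.codRestrict X.fixed (LinearMap.id + X.w) (fun x => by
        rw [X.mem_fixed]
        simp only [LinearMap.add_apply, LinearMap.id_apply, map_add, X.w_w x]
        rw [add_comm])
      w_w := X.w_w
      w_res := fun y => y.2
      tr_w := fun x => Subtype.ext (by
        simp only [LinearMap.codRestrict_apply, LinearMap.add_apply, LinearMap.id_apply,
          X.w_w x]
        rw [add_comm])
      res_tr := fun x => by
        simp only [Submodule.subtype_apply, LinearMap.codRestrict_apply, LinearMap.add_apply,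
          LinearMap.id_apply]
      tr_res := fun y => Subtype.ext (by
        simp only [LinearMap.codRestrict_apply, LinearMap.add_apply, LinearMap.id_apply,
          Submodule.coe_subtype, Submodule.coe_add]
        rw [y.2]) }
  map {X Y} φ :=
    { e := φ.f
      c := φ.f.restrict (fun x hx => by
        have hx' : X.w x = x := hx
        show Y.w (φ.f x) = φ.f x
        rw [← φ.comm x, hx'])
      comm_w := φ.comm
      comm_res := fun _ => rfl
      comm_tr := fun x => Subtype.ext (by
        simp only [LinearMap.codRestrict_apply, LinearMap.add_apply, LinearMap.id_apply,
          LinearMap.restrict_coe_apply, map_add, φ.comm x]) }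
  map_id X := RBarModule.Hom.ext (LinearMap.ext fun _ => rfl) (LinearMap.ext fun _ => rfl)
  map_comp φ ψ := RBarModule.Hom.ext (LinearMap.ext fun _ => rfl) (LinearMap.ext fun _ => rfl)

/-- If `2` is invertible in the commutative ring `R`, then the functor `u`
from `R`-modules with involution to `R̄`-modules is an equivalence of categories. -/
theorem uFunctor_isEquivalence (R : Type) [CommRing R] (h2 : IsUnit (2 : R)) :
    (uFunctor R).IsEquivalence := by
  obtain ⟨u, hu⟩ := h2
  set i : R := ↑u⁻¹ with hi
  have hi2 : i * 2 = 1 := by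
    rw [hi, ← hu]; exact u.inv_mul
  have hsmul : ∀ {M : Type} [AddCommGroup M] [Module R M] (x : M), i • (x + x) = x := by
    intro M _ _ x
    rw [← two_smul R x, smul_smul, hi2, one_smul]
  constructor
  · constructor
    intro X Y φ ψ h
    apply InvModule.Hom.ext
    exact congrArg RBarModule.Hom.e h
  · constructor
    intro X Y ψ
    refine ⟨⟨ψ.e, ψ.comm_w⟩, ?_⟩
    refine RBarModule.Hom.ext rfl ?_
    apply LinearMap.ext
    intro y
    apply Subtype.ext
    exact ψ.comm_res y
  · constructor
    intro Z
    let X : InvModule R := ⟨Z.Ce, Z.w, Z.w_w⟩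
    refine ⟨X, ⟨?_⟩⟩
    refine ⟨⟨LinearMap.id, i • (Z.tr ∘ₗ X.fixed.subtype), fun x => rfl, ?_, ?_⟩,
      ⟨LinearMap.id, LinearMap.codRestrict X.fixed Z.res (fun y => Z.w_res y), fun x => rfl,
        fun y => rfl, ?_⟩, ?_, ?_⟩
    · intro y
      have hy : Z.w (y.1 : Z.Ce) = y.1 := y.2
      show (y.1 : Z.Ce) = Z.res (i • Z.tr y.1)
      rw [map_smul, Z.res_tr, hy, hsmul]
    · have key : ∀ x : Z.Ce, i • Z.tr (x + Z.w x) = Z.tr x := fun x => by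
        rw [map_add, Z.tr_w, hsmul]
      intro x
      exact key x
    · intro x
      apply Subtype.ext
      show Z.res (Z.tr (x : Z.Ce)) = x + Z.w x
      exact Z.res_tr x
    · refine RBarModule.Hom.ext rfl ?_
      apply LinearMap.ext
      intro y
      apply Subtype.ext
      have hy : Z.w (y.1 : Z.Ce) = y.1 := y.2
      show Z.res (i • Z.tr (y.1 : Z.Ce)) = (y.1 : Z.Ce)
      rw [map_smul, Z.res_tr, hy, hsmul]
    · refine RBarModule.Hom.ext rfl ?_
      apply LinearMap.ext
      intro y
      show i • Z.tr (Z.res y) = y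
      rw [Z.tr_res, hsmul]
end

section
/- Let M be a ℤ/2-Mackey functor and A an abelian group (with Ā the constant Mackey functor). Then the box product M ⊠ Ā is given as follows: (M ⊠ Ā)(C₂/e) = M(C₂/e) ⊗ A with involution w ⊗ id; (M ⊠ Ā)(C₂/C₂) = (M(C₂/C₂) ⊗ A)/I, where I is the subgroup generated by the elements (tr(res(x)) − 2x) ⊗ z for x ∈ M(C₂/C₂) and z ∈ A; the restriction is induced by res ⊗ id and the transfer by tr ⊗ id. -/
/-!
Statement 15: For a `ℤ/2`-Mackey functor `M` and an abelian group `A` (with associated constant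
Mackey functor `Ā`), the box product `M ⊠ Ā` is the Mackey functor with value `M(C₂/e) ⊗ A`
(involution `w ⊗ id`) at `C₂/e`, value `(M(C₂/C₂) ⊗ A)/I` at `C₂/C₂` — where `I` is the
subgroup generated by the elements `(tr(res x) − 2x) ⊗ z` — with restriction induced by
`res ⊗ id` and transfer induced by `tr ⊗ id`.

The box product is the Day convolution monoidal product on Mackey functors; maps out of
`M ⊠ N` correspond to bimorphisms, so `M ⊠ Ā` is formalized through its universal property
`IsBoxProduct` below.
-/

open TensorProduct

/-- A `ℤ/2`-Mackey functor (of abelian groups). -/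
structure MackeyGrp : Type 1 where
  Ce : Type
  CC : Type
  [addCe : AddCommGroup Ce]
  [addCC : AddCommGroup CC]
  w : Ce →+ Ce
  res : CC →+ Ce
  tr : Ce →+ CC
  w_w : ∀ x, w (w x) = x
  w_res : ∀ y, w (res y) = res y
  tr_w : ∀ x, tr (w x) = tr x
  res_tr : ∀ x, res (tr x) = x + w x

attribute [instance] MackeyGrp.addCe MackeyGrp.addCC

/-- Morphisms of Mackey functors. -/
structure MackeyHom (M N : MackeyGrp) where
  he : M.Ce →+ N.Ce
  hc : M.CC →+ N.CC
  comm_w : ∀ x, he (M.w x) = N.w (he x)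
  comm_res : ∀ y, he (M.res y) = N.res (hc y)
  comm_tr : ∀ x, hc (M.tr x) = N.tr (he x)

/-- A bimorphism of Mackey functors (the maps classified by the box product = Day
convolution): biadditive pairings at both levels, compatible with the involutions and
restrictions and satisfying Frobenius reciprocity. -/
structure Bimor (M N P : MackeyGrp) where
  e : M.Ce → N.Ce → P.Ce
  c : M.CC → N.CC → P.CC
  e_add_left : ∀ a a' b, e (a + a') b = e a b + e a' b
  e_add_right : ∀ a b b', e a (b + b') = e a b + e a b'
  c_add_left : ∀ x x' y, c (x + x') y = c x y + c x' y
  c_add_right : ∀ x y y', c x (y + y') = c x y + c x y'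
  comm_w : ∀ a b, P.w (e a b) = e (M.w a) (N.w b)
  comm_res : ∀ x y, P.res (c x y) = e (M.res x) (N.res y)
  frob_left : ∀ a y, P.tr (e a (N.res y)) = c (M.tr a) y
  frob_right : ∀ x b, P.tr (e (M.res x) b) = c x (N.tr b)

/-- `B`, equipped with a bimorphism `η` from `M` and `N`, is *the* box product `M ⊠ N` when
it satisfies the universal property: every bimorphism out of `M` and `N` factors uniquely
through `η` via a morphism of Mackey functors. -/
def IsBoxProduct (M N B : MackeyGrp) (η : Bimor M N B) : Prop :=
  ∀ (P : MackeyGrp) (φ : Bimor M N P),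
    ∃! f : MackeyHom B P,
      (∀ a b, f.he (η.e a b) = φ.e a b) ∧ ∀ x y, f.hc (η.c x y) = φ.c x y

/-- The constant Mackey functor `Ā` of an abelian group `A`: both values are `A`, the
involution is trivial, `res = id` and `tr` is multiplication by `2`. -/
def constMackeyGrp (A : Type) [AddCommGroup A] : MackeyGrp where
  Ce := A
  CC := A
  w := AddMonoidHom.id A
  res := AddMonoidHom.id A
  tr := AddMonoidHom.id A + AddMonoidHom.id A
  w_w _ := rfl
  w_res _ := rfl
  tr_w _ := rfl
  res_tr _ := rfl

variable (M : MackeyGrp) (A : Type) [AddCommGroup A]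

/-- The subgroup `I` of `M(C₂/C₂) ⊗ A` generated by the elements `(tr(res x) − 2x) ⊗ z`. -/
noncomputable def boxRel : Submodule ℤ (M.CC ⊗[ℤ] A) :=
  Submodule.span ℤ {t | ∃ (x : M.CC) (z : A), t = (M.tr (M.res x) - (x + x)) ⊗ₜ[ℤ] z}

/-- The restriction of the box product `M ⊠ Ā`, induced by `res ⊗ id` on the quotient. -/
noncomputable def boxRes : (M.CC ⊗[ℤ] A) ⧸ boxRel M A →ₗ[ℤ] M.Ce ⊗[ℤ] A :=
  Submodule.liftQ _ (TensorProduct.map M.res.toIntLinearMap LinearMap.id) (by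
    refine Submodule.span_le.2 ?_
    rintro t ⟨x, z, rfl⟩
    simp only [SetLike.mem_coe, LinearMap.mem_ker, TensorProduct.map_tmul,
      AddMonoidHom.coe_toIntLinearMap, LinearMap.id_apply]
    have h0 : M.res (M.tr (M.res x) - (x + x)) = 0 := by
      rw [map_sub, map_add, M.res_tr, M.w_res]
      abel
    show (TensorProduct.map M.res.toIntLinearMap LinearMap.id)
      ((M.tr (M.res x) - (x + x)) ⊗ₜ[ℤ] z) = 0
    rw [TensorProduct.map_tmul, AddMonoidHom.coe_toIntLinearMap, h0, TensorProduct.zero_tmul])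

/-- The box product `M ⊠ Ā` described explicitly: `M(C₂/e) ⊗ A` with involution `w ⊗ id` at
`C₂/e`, and `(M(C₂/C₂) ⊗ A)/I` at `C₂/C₂`, with restriction induced by `res ⊗ id` and
transfer induced by `tr ⊗ id`. -/
noncomputable def boxConst : MackeyGrp where
  Ce := M.Ce ⊗[ℤ] A
  CC := (M.CC ⊗[ℤ] A) ⧸ boxRel M A
  w := (TensorProduct.map M.w.toIntLinearMap LinearMap.id).toAddMonoidHom
  res := (boxRes M A).toAddMonoidHom
  tr := ((boxRel M A).mkQ ∘ₗ TensorProduct.map M.tr.toIntLinearMap LinearMap.id).toAddMonoidHom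
  w_w t := by
    simp only [LinearMap.toAddMonoidHom_coe]
    induction t using TensorProduct.induction_on with
    | zero => simp
    | tmul a z => simp [M.w_w a]
    | add s t hs ht => simp only [map_add, hs, ht]
  w_res y := by
    obtain ⟨t, rfl⟩ := Submodule.Quotient.mk_surjective _ y
    simp only [LinearMap.toAddMonoidHom_coe, boxRes, Submodule.liftQ_apply]
    show (TensorProduct.map M.w.toIntLinearMap LinearMap.id)
      (TensorProduct.map M.res.toIntLinearMap LinearMap.id t)
        = TensorProduct.map M.res.toIntLinearMap LinearMap.id t
    induction t using TensorProduct.induction_on with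
    | zero => simp
    | tmul x z => simp [M.w_res x]
    | add s t hs ht => simp only [map_add, hs, ht]
  tr_w t := by
    simp only [LinearMap.toAddMonoidHom_coe, LinearMap.comp_apply]
    induction t using TensorProduct.induction_on with
    | zero => simp
    | tmul a z =>
        show (boxRel M A).mkQ (TensorProduct.map M.tr.toIntLinearMap LinearMap.id (M.w a ⊗ₜ[ℤ] z))
          = (boxRel M A).mkQ (TensorProduct.map M.tr.toIntLinearMap LinearMap.id (a ⊗ₜ[ℤ] z))
        rw [TensorProduct.map_tmul, TensorProduct.map_tmul, AddMonoidHom.coe_toIntLinearMap,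
          M.tr_w a]
    | add s t hs ht => simp only [map_add, hs, ht]
  res_tr t := by
    simp only [LinearMap.toAddMonoidHom_coe, LinearMap.comp_apply, Submodule.mkQ_apply,
      boxRes, Submodule.liftQ_apply]
    induction t using TensorProduct.induction_on with
    | zero => simp
    | tmul a z =>
        show TensorProduct.map M.res.toIntLinearMap LinearMap.id
          (TensorProduct.map M.tr.toIntLinearMap LinearMap.id (a ⊗ₜ[ℤ] z)) = _
        simp only [Submodule.mkQ_apply, Submodule.liftQ_apply, TensorProduct.map_tmul, AddMonoidHom.coe_toIntLinearMap,
          LinearMap.id_apply, M.res_tr a, TensorProduct.add_tmul]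
    | add s t hs ht =>
        simp only [map_add, hs, ht]
        abel

/-- The canonical bimorphism from `M` and `Ā` to the explicit model `boxConst M A`. -/
noncomputable def boxConstBimor : Bimor M (constMackeyGrp A) (boxConst M A) where
  e a b := a ⊗ₜ[ℤ] b
  c x y := Submodule.Quotient.mk (x ⊗ₜ[ℤ] y)
  e_add_left a a' b := TensorProduct.add_tmul a a' b
  e_add_right a b b' := TensorProduct.tmul_add a b b'
  c_add_left x x' y := by
    exact (congrArg (Submodule.Quotient.mk (p := boxRel M A))
      (TensorProduct.add_tmul (M := M.CC) (N := A) x x' y)).trans (Submodule.Quotient.mk_add _)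
  c_add_right x y y' := by
    exact (congrArg (Submodule.Quotient.mk (p := boxRel M A))
      (TensorProduct.tmul_add (M := M.CC) (N := A) x y y')).trans (Submodule.Quotient.mk_add _)
  comm_w a b := by
    show (TensorProduct.map M.w.toIntLinearMap LinearMap.id) (a ⊗ₜ[ℤ] (b : A))
      = M.w a ⊗ₜ[ℤ] ((constMackeyGrp A).w b)
    simp only [TensorProduct.map_tmul, AddMonoidHom.coe_toIntLinearMap, LinearMap.id_apply]
    rfl
  comm_res x y := by
    show (boxRes M A) (Submodule.Quotient.mk (x ⊗ₜ[ℤ] (y : A)))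
      = M.res x ⊗ₜ[ℤ] ((constMackeyGrp A).res y)
    simp only [boxRes, Submodule.liftQ_apply, TensorProduct.map_tmul,
      AddMonoidHom.coe_toIntLinearMap, LinearMap.id_apply]
    rfl
  frob_left a y := by
    show ((boxRel M A).mkQ ∘ₗ TensorProduct.map M.tr.toIntLinearMap LinearMap.id)
        (a ⊗ₜ[ℤ] ((constMackeyGrp A).res y))
      = Submodule.Quotient.mk (M.tr a ⊗ₜ[ℤ] (y : A))
    rfl
  frob_right x b := by
    show ((boxRel M A).mkQ ∘ₗ TensorProduct.map M.tr.toIntLinearMap LinearMap.id)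
        (M.res x ⊗ₜ[ℤ] (b : A))
      = Submodule.Quotient.mk (x ⊗ₜ[ℤ] ((constMackeyGrp A).tr b))
    revert b
    intro (b : A)
    show Submodule.Quotient.mk (p := boxRel M A) (M.tr (M.res x) ⊗ₜ[ℤ] b)
      = Submodule.Quotient.mk (p := boxRel M A) (x ⊗ₜ[ℤ] (b + b))
    rw [Submodule.Quotient.eq]
    refine Submodule.subset_span ⟨x, b, ?_⟩
    rw [TensorProduct.sub_tmul, TensorProduct.add_tmul, TensorProduct.tmul_add]

theorem MackeyHom.ext' {M N : MackeyGrp} {f g : MackeyHom M N}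
    (h1 : f.he = g.he) (h2 : f.hc = g.hc) : f = g := by
  cases f; cases g; simp_all

/-- The bilinear map underlying `φ.e`. -/
noncomputable def bimorE {M P : MackeyGrp} (φ : Bimor M (constMackeyGrp A) P) :
    M.Ce →ₗ[ℤ] A →ₗ[ℤ] P.Ce where
  toFun a := (AddMonoidHom.mk' (φ.e a) (φ.e_add_right a)).toIntLinearMap
  map_add' a a' := LinearMap.ext fun b => φ.e_add_left a a' b
  map_smul' n a := LinearMap.ext fun b => by
    exact (AddMonoidHom.mk' (fun a => φ.e a b) (fun u v => φ.e_add_left u v b)).map_zsmul n a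

/-- The bilinear map underlying `φ.c`. -/
noncomputable def bimorC {M P : MackeyGrp} (φ : Bimor M (constMackeyGrp A) P) :
    M.CC →ₗ[ℤ] A →ₗ[ℤ] P.CC where
  toFun x := (AddMonoidHom.mk' (φ.c x) (φ.c_add_right x)).toIntLinearMap
  map_add' x x' := LinearMap.ext fun y => φ.c_add_left x x' y
  map_smul' n x := LinearMap.ext fun y => by
    exact (AddMonoidHom.mk' (fun x => φ.c x y) (fun u v => φ.c_add_left u v y)).map_zsmul n x

theorem bimorC_rel {M : MackeyGrp} {P : MackeyGrp} (φ : Bimor M (constMackeyGrp A) P)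
    (x : M.CC) (z : A) : φ.c (M.tr (M.res x)) z = φ.c x z + φ.c x z := by
  have h1 := φ.frob_left (M.res x) z
  have h2 := φ.frob_right x z
  have hres : (constMackeyGrp A).res z = z := rfl
  have htr : (constMackeyGrp A).tr z = z + z := rfl
  rw [hres] at h1
  rw [htr] at h2
  rw [← h1, h2]
  exact φ.c_add_right x z z

/-- The explicit Mackey functor `boxConst M A`, with its canonical
bimorphism, is the box product `M ⊠ Ā` of `M` with the constant Mackey functor on `A`. -/
theorem boxConst_isBoxProduct :
    IsBoxProduct M (constMackeyGrp A) (boxConst M A) (boxConstBimor M A) := by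
  intro P φ
  set fe : M.Ce ⊗[ℤ] A →ₗ[ℤ] P.Ce := TensorProduct.lift (bimorE A φ) with hfe
  set fc0 : M.CC ⊗[ℤ] A →ₗ[ℤ] P.CC := TensorProduct.lift (bimorC A φ) with hfc0
  have hker : boxRel M A ≤ LinearMap.ker fc0 := by
    refine Submodule.span_le.2 ?_
    rintro t ⟨x, z, rfl⟩
    simp only [SetLike.mem_coe, LinearMap.mem_ker, hfc0]
    rw [TensorProduct.sub_tmul, TensorProduct.add_tmul]
    show lift (bimorC A φ) _ = 0
    rw [map_sub, map_add]
    show φ.c (M.tr (M.res x)) z - (φ.c x z + φ.c x z) = 0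
    rw [bimorC_rel A φ x z]
    abel
  set fc : ((M.CC ⊗[ℤ] A) ⧸ boxRel M A) →ₗ[ℤ] P.CC := Submodule.liftQ _ fc0 hker with hfc
  have fe_tmul : ∀ a b, fe (a ⊗ₜ[ℤ] b) = φ.e a b := fun a b => rfl
  have fc_mk : ∀ (x : M.CC) (y : A),
      fc (Submodule.Quotient.mk (x ⊗ₜ[ℤ] y)) = φ.c x y := fun x y => rfl
  refine ⟨⟨fe.toAddMonoidHom, fc.toAddMonoidHom, ?_, ?_, ?_⟩, ⟨fun a b => rfl, fun x y => rfl⟩, ?_⟩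
  · -- comm_w
    intro t
    show fe ((TensorProduct.map M.w.toIntLinearMap LinearMap.id) t) = P.w (fe t)
    induction t using TensorProduct.induction_on with
    | zero => simp
    | tmul a b =>
        simp only [TensorProduct.map_tmul, AddMonoidHom.coe_toIntLinearMap, LinearMap.id_apply,
          fe_tmul]
        have : (constMackeyGrp A).w b = b := rfl
        rw [φ.comm_w a b, this]
    | add s t hs ht => simp only [map_add, hs, ht, map_add (P.w)]
  · -- comm_res
    intro y
    obtain ⟨t, rfl⟩ := Submodule.Quotient.mk_surjective _ y
    show fe (boxRes M A (Submodule.Quotient.mk t)) = P.res (fc (Submodule.Quotient.mk t))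
    induction t using TensorProduct.induction_on with
    | zero => simp [boxRes]
    | tmul x z =>
        simp only [boxRes, Submodule.liftQ_apply, TensorProduct.map_tmul,
          AddMonoidHom.coe_toIntLinearMap, LinearMap.id_apply, fe_tmul, fc_mk]
        have : (constMackeyGrp A).res z = z := rfl
        rw [φ.comm_res x z, this]
        rfl
    | add s t hs ht =>
        simp only [Submodule.Quotient.mk_add, map_add, hs, ht]
  · -- comm_tr
    intro t
    show fc (((boxRel M A).mkQ ∘ₗ TensorProduct.map M.tr.toIntLinearMap LinearMap.id) t)
      = P.tr (fe t)
    induction t using TensorProduct.induction_on with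
    | zero => simp
    | tmul a z =>
        simp only [LinearMap.comp_apply, TensorProduct.map_tmul,
          AddMonoidHom.coe_toIntLinearMap, LinearMap.id_apply, Submodule.mkQ_apply, fc_mk,
          fe_tmul]
        have h1 := φ.frob_left a z
        have : (constMackeyGrp A).res z = z := rfl
        rw [this] at h1
        exact h1.symm
    | add s t hs ht => simp only [map_add, hs, ht, map_add (P.tr)]
  · -- uniqueness
    rintro g ⟨hge, hgc⟩
    refine MackeyHom.ext' ?_ ?_
    · refine AddMonoidHom.ext fun t => ?_
      induction t using TensorProduct.induction_on with
      | zero => exact (map_zero _).trans (map_zero _).symm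
      | tmul a b => exact hge a b
      | add s t hs ht =>
          exact (map_add g.he s t).trans ((congrArg₂ (· + ·) hs ht).trans (map_add fe.toAddMonoidHom s t).symm)
    · refine AddMonoidHom.ext fun y => ?_
      obtain ⟨t, rfl⟩ := Submodule.Quotient.mk_surjective _ y
      induction t using TensorProduct.induction_on with
      | zero =>
          have : (Submodule.Quotient.mk (0 : M.CC ⊗[ℤ] A) :
            (M.CC ⊗[ℤ] A) ⧸ boxRel M A) = 0 := rfl
          exact (map_zero g.hc).trans (map_zero fc.toAddMonoidHom).symm
      | tmul x z => exact hgc x z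
      | add s t hs ht =>
          rw [Submodule.Quotient.mk_add]
          exact (map_add g.hc _ _).trans ((congrArg₂ (· + ·) hs ht).trans (map_add fc.toAddMonoidHom _ _).symm)
end
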